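/- arXiv:2205.07762 — 7 statements merged into one kernel-verified Lean document; each statement's English description precedes it below -/
import Mathlib

section
/- Let l > 0, d ≥ 0, γ_max ∈ (0, π/2), and suppose k₁ < 0 and k₂ > (d/l)·tan²(γ_max)/√(l² + d²·tan²(γ_max)). Then for every κ₀ with |κ₀| ≤ κ̄₀ = tan(γ_max)/√(l² + d²·tan²(γ_max)), writing λ₁ = √(1 − d²κ₀²), λ₂ = 1 + (l² − d²)κ₀², λ₃ = λ₁λ₂k₁k₂ − dκ₀²λ₂k₁ − lκ₀², both stability inequalities hold: k₁·(λ₁ + d·k₂) < 0 and λ₃ < 0. (Proposition 1, negative-feedback case.) -/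
open Real

theorem stability_negative_feedback
    (l d γmax k₁ k₂ : ℝ)
    (hl : 0 < l) (hd : 0 ≤ d) (hγ0 : 0 < γmax) (hγ1 : γmax < π / 2)
    (hk₁ : k₁ < 0)
    (hk₂ : k₂ > d / l * Real.tan γmax ^ 2 / Real.sqrt (l ^ 2 + d ^ 2 * Real.tan γmax ^ 2)) :
    ∀ κ0 : ℝ, |κ0| ≤ Real.tan γmax / Real.sqrt (l ^ 2 + d ^ 2 * Real.tan γmax ^ 2) →
      k₁ * (Real.sqrt (1 - d ^ 2 * κ0 ^ 2) + d * k₂) < 0 ∧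
      Real.sqrt (1 - d ^ 2 * κ0 ^ 2) * (1 + (l ^ 2 - d ^ 2) * κ0 ^ 2) * k₁ * k₂
        - d * κ0 ^ 2 * (1 + (l ^ 2 - d ^ 2) * κ0 ^ 2) * k₁ - l * κ0 ^ 2 < 0 := by
  intro κ0 hκ
  have ht : 0 < Real.tan γmax := Real.tan_pos_of_pos_of_lt_pi_div_two hγ0 hγ1
  set t := Real.tan γmax with htdef
  have hS2 : (0:ℝ) < l ^ 2 + d ^ 2 * t ^ 2 := by positivity
  set S := Real.sqrt (l ^ 2 + d ^ 2 * t ^ 2) with hSdef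
  have hS : 0 < S := Real.sqrt_pos.mpr hS2
  have hSsq : S ^ 2 = l ^ 2 + d ^ 2 * t ^ 2 := Real.sq_sqrt hS2.le
  clear_value S
  clear_value t
  clear htdef hSdef hγ0 hγ1
  -- k₂ is positive
  have hk₂pos : 0 < k₂ := lt_of_le_of_lt (by positivity) hk₂
  -- κ0² S² ≤ t²
  have h1 : |κ0| * S ≤ t := (le_div_iff₀ hS).mp hκ
  have hκ2 : κ0 ^ 2 * S ^ 2 ≤ t ^ 2 := by
    have h0 : 0 ≤ |κ0| * S := by positivity
    have h2 : |κ0| * S * (|κ0| * S) ≤ t * t := mul_le_mul h1 h1 h0 (h0.trans h1)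
    have h4 : |κ0| * S * (|κ0| * S) = κ0 ^ 2 * S ^ 2 := by
      rw [show |κ0| * S * (|κ0| * S) = |κ0| ^ 2 * S ^ 2 by ring, sq_abs]
    nlinarith [h2, h4]
  clear hκ h1
  -- 1 - d²κ0² ≥ l²/S² > 0
  have h3 : l ^ 2 ≤ (1 - d ^ 2 * κ0 ^ 2) * S ^ 2 := by
    have := mul_le_mul_of_nonneg_left hκ2 (sq_nonneg d)
    nlinarith [this, hSsq]
  have hone : 0 < 1 - d ^ 2 * κ0 ^ 2 := by nlinarith [h3, pow_pos hS 2, pow_pos hl 2]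
  set L1 := Real.sqrt (1 - d ^ 2 * κ0 ^ 2) with hL1def
  have hL1pos : 0 < L1 := Real.sqrt_pos.mpr hone
  -- L1 * S ≥ l
  have hL1lb : l ≤ L1 * S := by
    have hfrac : (l / S) ^ 2 ≤ 1 - d ^ 2 * κ0 ^ 2 := by
      rw [div_pow, div_le_iff₀ (by positivity)]
      linarith
    have hsq := Real.sqrt_le_sqrt hfrac
    rw [Real.sqrt_sq (by positivity : 0 ≤ l / S)] at hsq
    calc l = l / S * S := by field_simp
    _ ≤ L1 * S := by nlinarith [mul_le_mul_of_nonneg_right hsq hS.le]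
  clear_value L1
  clear hL1def
  -- key: d κ0² < L1 k₂
  have hk₂' : d * t ^ 2 < k₂ * S * l := by
    have h : d / l * t ^ 2 / S < k₂ := hk₂
    rw [div_lt_iff₀ hS, div_mul_eq_mul_div, div_lt_iff₀ hl] at h
    linarith
  clear hk₂
  have hκ2d : d * κ0 ^ 2 * S ^ 2 ≤ d * t ^ 2 := by
    have := mul_le_mul_of_nonneg_left hκ2 hd
    nlinarith [this]
  have hkey : d * κ0 ^ 2 < L1 * k₂ := by
    have hstep : l * (k₂ * S) ≤ L1 * S * (k₂ * S) :=
      mul_le_mul_of_nonneg_right hL1lb (mul_pos hk₂pos hS).le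
    have hfin : d * κ0 ^ 2 * S ^ 2 < L1 * k₂ * S ^ 2 := by nlinarith [hstep, hk₂', hκ2d]
    exact lt_of_mul_lt_mul_right hfin (sq_nonneg S)
  constructor
  · have h5 : 0 < L1 + d * k₂ := by
      have := mul_nonneg hd hk₂pos.le
      linarith
    exact mul_neg_of_neg_of_pos hk₁ h5
  · have hL2 : 0 < 1 + (l ^ 2 - d ^ 2) * κ0 ^ 2 := by
      nlinarith [mul_nonneg (sq_nonneg l) (sq_nonneg κ0), hone]
    have hterm : k₁ * ((1 + (l ^ 2 - d ^ 2) * κ0 ^ 2) * (L1 * k₂ - d * κ0 ^ 2)) < 0 :=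
      mul_neg_of_neg_of_pos hk₁ (mul_pos hL2 (by linarith))
    nlinarith [hterm, mul_nonneg hl.le (sq_nonneg κ0)]
end

section
/- Let l > 0, d > 0, γ_max ∈ (0, π/2), and suppose k₁ > 0 and k₂ < −1/d. Then for every κ₀ with |κ₀| ≤ κ̄₀ = tan(γ_max)/√(l² + d²·tan²(γ_max)), writing λ₁ = √(1 − d²κ₀²), λ₂ = 1 + (l² − d²)κ₀², λ₃ = λ₁λ₂k₁k₂ − dκ₀²λ₂k₁ − lκ₀², both stability inequalities hold: k₁·(λ₁ + d·k₂) < 0 and λ₃ < 0. (Proposition 1, positive-feedback case.) -/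
open Real

theorem stability_positive_feedback
    (l d γmax k₁ k₂ : ℝ)
    (hl : 0 < l) (hd : 0 < d) (hγ0 : 0 < γmax) (hγ1 : γmax < π / 2)
    (hk₁ : k₁ > 0) (hk₂ : k₂ < -1 / d) :
    ∀ κ0 : ℝ, |κ0| ≤ Real.tan γmax / Real.sqrt (l ^ 2 + d ^ 2 * Real.tan γmax ^ 2) →
      k₁ * (Real.sqrt (1 - d ^ 2 * κ0 ^ 2) + d * k₂) < 0 ∧
      Real.sqrt (1 - d ^ 2 * κ0 ^ 2) * (1 + (l ^ 2 - d ^ 2) * κ0 ^ 2) * k₁ * k₂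
        - d * κ0 ^ 2 * (1 + (l ^ 2 - d ^ 2) * κ0 ^ 2) * k₁ - l * κ0 ^ 2 < 0 := by
  intro κ0 hκ
  set t := Real.tan γmax with ht_def
  have ht : 0 < t := Real.tan_pos_of_pos_of_lt_pi_div_two hγ0 hγ1
  have hden : 0 < l ^ 2 + d ^ 2 * t ^ 2 := by positivity
  have hs : Real.sqrt (l ^ 2 + d ^ 2 * t ^ 2) ^ 2 = l ^ 2 + d ^ 2 * t ^ 2 :=
    Real.sq_sqrt hden.le
  have hs0 : 0 < Real.sqrt (l ^ 2 + d ^ 2 * t ^ 2) := Real.sqrt_pos.mpr hden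
  -- κ0² ≤ t²/(l²+d²t²)
  have hκsq : κ0 ^ 2 ≤ t ^ 2 / (l ^ 2 + d ^ 2 * t ^ 2) := by
    have h1 : κ0 ^ 2 ≤ (t / Real.sqrt (l ^ 2 + d ^ 2 * t ^ 2)) ^ 2 := by
      calc κ0 ^ 2 = |κ0| ^ 2 := (sq_abs κ0).symm
        _ ≤ _ := by
            apply pow_le_pow_left₀ (abs_nonneg κ0) hκ
    calc κ0 ^ 2 ≤ (t / Real.sqrt (l ^ 2 + d ^ 2 * t ^ 2)) ^ 2 := h1
      _ = t ^ 2 / (l ^ 2 + d ^ 2 * t ^ 2) := by rw [div_pow, hs]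
  have hdk : d ^ 2 * κ0 ^ 2 < 1 := by
    have h2 : d ^ 2 * κ0 ^ 2 ≤ d ^ 2 * t ^ 2 / (l ^ 2 + d ^ 2 * t ^ 2) := by
      rw [mul_div_assoc]
      exact mul_le_mul_of_nonneg_left hκsq (by positivity)
    have h3 : d ^ 2 * t ^ 2 / (l ^ 2 + d ^ 2 * t ^ 2) < 1 := by
      rw [div_lt_one hden]; nlinarith
    linarith
  set L1 := Real.sqrt (1 - d ^ 2 * κ0 ^ 2) with hL1def
  have hL1pos : 0 < L1 := Real.sqrt_pos.mpr (by linarith)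
  have hL1le : L1 ≤ 1 := by
    rw [hL1def]
    calc Real.sqrt (1 - d ^ 2 * κ0 ^ 2) ≤ Real.sqrt 1 := Real.sqrt_le_sqrt (by nlinarith)
      _ = 1 := Real.sqrt_one
  have hdk₂ : d * k₂ < -1 := by
    have h := mul_lt_mul_of_pos_left hk₂ hd
    have he : d * (-1 / d) = -1 := by field_simp
    linarith
  have hL2pos : 0 < 1 + (l ^ 2 - d ^ 2) * κ0 ^ 2 := by nlinarith
  constructor
  · apply mul_neg_of_pos_of_neg hk₁
    linarith
  · have hk₂neg : k₂ < 0 := by nlinarith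
    have t1 : L1 * (1 + (l ^ 2 - d ^ 2) * κ0 ^ 2) * k₁ * k₂ < 0 := by
      apply mul_neg_of_pos_of_neg _ hk₂neg
      positivity
    nlinarith [sq_nonneg κ0, mul_pos hd hk₁, mul_nonneg (mul_nonneg hd.le (sq_nonneg κ0)) (mul_nonneg hL2pos.le hk₁.le)]
end

section
/- Let V > 0, l > 0, d > 0, γ_max ∈ (0, π/2), and suppose either (i) k₁ < 0 and k₂ > (d/l)·tan²(γ_max)/√(l² + d²·tan²(γ_max)), or (ii) k₁ > 0 and k₂ < −1/d. Then for every κ₀ with |κ₀| ≤ κ̄₀ = tan(γ_max)/√(l² + d²·tan²(γ_max)), writing λ₁ = √(1 − d²κ₀²), λ₂ = 1 + (l² − d²)κ₀², λ₃ = λ₁λ₂k₁k₂ − dκ₀²λ₂k₁ − lκ₀², every complex root z of z² − (V·k₁·λ₂/(l·λ₁))·(λ₁ + d·k₂)·z − V²·λ₃/(l·λ₁²) = 0 has strictly negative real part. (Proposition 1.) -/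
open Real

lemma quad_root_re_neg (b c : ℝ) (hb : b < 0) (hc : c < 0) (z : ℂ)
    (h : z ^ 2 - (b : ℂ) * z - (c : ℂ) = 0) : z.re < 0 := by
  obtain ⟨h1, h2⟩ := Complex.ext_iff.mp h
  simp [pow_two, Complex.mul_re, Complex.mul_im] at h1 h2
  have h4 : z.im * (2 * z.re - b) = 0 := by linear_combination h2
  rcases mul_eq_zero.mp h4 with hy | hx
  · by_contra hge
    push_neg at hge
    rw [hy] at h1
    nlinarith [h1]
  · linarith

set_option maxHeartbeats 1000000 in
theorem proposition_1_stability
    (V l d γmax k₁ k₂ : ℝ)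
    (hV : 0 < V) (hl : 0 < l) (hd : 0 < d) (hγ0 : 0 < γmax) (hγ1 : γmax < π / 2)
    (hk : (k₁ < 0 ∧
            k₂ > d / l * Real.tan γmax ^ 2 / Real.sqrt (l ^ 2 + d ^ 2 * Real.tan γmax ^ 2))
          ∨ (k₁ > 0 ∧ k₂ < -1 / d)) :
    ∀ κ0 : ℝ, |κ0| ≤ Real.tan γmax / Real.sqrt (l ^ 2 + d ^ 2 * Real.tan γmax ^ 2) →
      ∀ lam1 lam2 lam3 : ℝ,
        lam1 = Real.sqrt (1 - d ^ 2 * κ0 ^ 2) →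
        lam2 = 1 + (l ^ 2 - d ^ 2) * κ0 ^ 2 →
        lam3 = lam1 * lam2 * k₁ * k₂ - d * κ0 ^ 2 * lam2 * k₁ - l * κ0 ^ 2 →
        ∀ z : ℂ,
          z ^ 2 - (↑(V * k₁ * lam2 / (l * lam1) * (lam1 + d * k₂)) : ℂ) * z
            - (↑(V ^ 2 * lam3 / (l * lam1 ^ 2)) : ℂ) = 0 → z.re < 0 := by
  intro κ0 hκ lam1 lam2 lam3 e1 e2 e3 z hz
  set T := Real.tan γmax with hT_def
  set S := l ^ 2 + d ^ 2 * T ^ 2 with hS_def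
  set s := Real.sqrt S with hs_def
  clear_value T
  have hT : 0 < T := hT_def ▸ Real.tan_pos_of_pos_of_lt_pi_div_two hγ0 hγ1
  have hS : 0 < S := by rw [hS_def]; positivity
  have hs : 0 < s := hs_def ▸ Real.sqrt_pos.mpr hS
  have hs2 : s ^ 2 = S := hs_def ▸ Real.sq_sqrt hS.le
  clear_value s S
  -- κ0^2 * S ≤ T^2
  have hκ2 : κ0 ^ 2 * S ≤ T ^ 2 := by
    have h' : |κ0| ^ 2 ≤ (T / s) ^ 2 := pow_le_pow_left₀ (abs_nonneg _) hκ 2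
    rw [sq_abs, div_pow, hs2] at h'
    exact (le_div_iff₀ hS).mp h'
  have hpos : 0 < 1 - d ^ 2 * κ0 ^ 2 := by nlinarith [hκ2, hS, hl, hd, sq_nonneg d]
  have hlam1pos : 0 < lam1 := e1 ▸ Real.sqrt_pos.mpr hpos
  have hlam1sq : lam1 ^ 2 = 1 - d ^ 2 * κ0 ^ 2 := e1 ▸ Real.sq_sqrt hpos.le
  have hlam1le : lam1 ≤ 1 := by
    rw [e1]
    exact Real.sqrt_le_one.mpr (by nlinarith [sq_nonneg (d * κ0)])
  have hlam2 : 0 < lam2 := by rw [e2]; nlinarith [hpos, sq_nonneg (l * κ0)]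
  have hls : l ≤ lam1 * s := by
    nlinarith [mul_le_mul_of_nonneg_left hκ2 (sq_nonneg d), hlam1sq, hs2,
      mul_pos hlam1pos hs, sq_nonneg (lam1 * s - l)]
  obtain ⟨hb, hc⟩ : V * k₁ * lam2 / (l * lam1) * (lam1 + d * k₂) < 0 ∧
      V ^ 2 * lam3 / (l * lam1 ^ 2) < 0 := by
    clear hz z hκ e1 e2 hγ0 hγ1 hT_def hs_def hS_def
    rcases hk with ⟨hk1, hk2'⟩ | ⟨hk1, hk2'⟩
    · -- k₁ < 0, k₂ large positive
      have hk2'' : d * T ^ 2 < k₂ * (l * s) := by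
        rw [gt_iff_lt, div_mul_eq_mul_div, div_div, div_lt_iff₀ (mul_pos hl hs)] at hk2'
        linarith
      have hklpos : 0 < k₂ * (l * s) := lt_trans (mul_pos hd (pow_pos hT 2)) hk2''
      have hk2pos : 0 < k₂ := lt_of_mul_lt_mul_right (by simpa using hklpos) (mul_pos hl hs).le
      have p1 : l * (d * T ^ 2) < (lam1 * s) * (k₂ * (l * s)) :=
        calc l * (d * T ^ 2) ≤ (lam1 * s) * (d * T ^ 2) :=
              mul_le_mul_of_nonneg_right hls (mul_nonneg hd.le (sq_nonneg T))
          _ < (lam1 * s) * (k₂ * (l * s)) :=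
              mul_lt_mul_of_pos_left hk2'' (mul_pos hlam1pos hs)
      have hκ2' : κ0 ^ 2 * s ^ 2 ≤ T ^ 2 := by rw [hs2]; exact hκ2
      have q1 : d * l * (κ0 ^ 2 * s ^ 2) ≤ d * l * T ^ 2 :=
        mul_le_mul_of_nonneg_left hκ2' (by positivity)
      have q2 : (d * κ0 ^ 2) * (l * s ^ 2) < (lam1 * k₂) * (l * s ^ 2) := by
        nlinarith [p1, q1]
      have key : d * κ0 ^ 2 < lam1 * k₂ :=
        lt_of_mul_lt_mul_right q2 (mul_nonneg hl.le (sq_nonneg s))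
      have t : 0 < lam2 * (lam1 * k₂ - d * κ0 ^ 2) := mul_pos hlam2 (by linarith)
      have hlam3 : lam3 < 0 := by
        rw [e3]
        nlinarith [mul_neg_of_neg_of_pos hk1 t, mul_nonneg hl.le (sq_nonneg κ0)]
      constructor
      · have hnum : V * k₁ * lam2 * (lam1 + d * k₂) < 0 := by
          nlinarith [mul_pos (mul_pos hV hlam2) (add_pos hlam1pos (mul_pos hd hk2pos)), hk1]
        calc V * k₁ * lam2 / (l * lam1) * (lam1 + d * k₂)
            = V * k₁ * lam2 * (lam1 + d * k₂) / (l * lam1) := by ring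
          _ < 0 := div_neg_of_neg_of_pos hnum (mul_pos hl hlam1pos)
      · exact div_neg_of_neg_of_pos
          (mul_neg_of_pos_of_neg (pow_pos hV 2) hlam3) (by positivity)
    · -- k₁ > 0, k₂ < -1/d
      have hk2'' : k₂ * d < -1 := (lt_div_iff₀ hd).mp hk2'
      have hdk : d * k₂ < -1 := by rw [mul_comm]; exact hk2''
      have hk2neg : k₂ < 0 := lt_of_mul_lt_mul_right (by simpa [mul_comm] using hdk.trans (by norm_num : (-1:ℝ) < 0)) hd.le
      have hfac : lam1 + d * k₂ < 0 := by linarith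
      have key : lam1 * k₂ - d * κ0 ^ 2 < 0 := by
        nlinarith [mul_neg_of_pos_of_neg hlam1pos hk2neg, mul_nonneg hd.le (sq_nonneg κ0)]
      have t : lam2 * (lam1 * k₂ - d * κ0 ^ 2) < 0 := mul_neg_of_pos_of_neg hlam2 key
      have hlam3 : lam3 < 0 := by
        rw [e3]
        nlinarith [mul_neg_of_pos_of_neg hk1 t, mul_nonneg hl.le (sq_nonneg κ0)]
      constructor
      · have hnum : V * k₁ * lam2 * (lam1 + d * k₂) < 0 := by
          nlinarith [mul_pos (mul_pos hV hk1) hlam2, hfac]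
        calc V * k₁ * lam2 / (l * lam1) * (lam1 + d * k₂)
            = V * k₁ * lam2 * (lam1 + d * k₂) / (l * lam1) := by ring
          _ < 0 := div_neg_of_neg_of_pos hnum (mul_pos hl hlam1pos)
      · exact div_neg_of_neg_of_pos
          (mul_neg_of_pos_of_neg (pow_pos hV 2) hlam3) (by positivity)
  exact quad_root_re_neg _ _ hb hc z hz
end

section
/- Let V > 0, l > 0, d > 0, k₁, k₂ ∈ ℝ, κ₀ with d²κ₀² < 1, λ₁ = √(1 − d²κ₀²), λ₂ = 1 + (l² − d²)κ₀², λ₃ = λ₁λ₂k₁k₂ − dκ₀²λ₂k₁ − lκ₀². Let A = [[(V·d/l)·(λ₂/λ₁)·k₁k₂, (V/λ₁)·(1 + (d/l)·λ₂·k₁)], [(V/l)·(λ₂·k₁k₂ − (l/λ₁)·κ₀²), (V/l)·λ₂·k₁]], B = (0, d/λ₁)ᵀ, C = (1, 0). Then for every s ∈ ℂ that is not an eigenvalue of A, C·(s·I₂ − A)⁻¹·B·s = ((V·d/λ₁²)·(1 + (d/l)·λ₂·k₁)·s) / (s² − (V·λ₂·k₁/(l·λ₁))·(λ₁ + d·k₂)·s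 − (V²/l)·(λ₃/λ₁²)). (Transfer function from curvature-rate input to lateral deviation, eqn (43).) -/
open Real Matrix

set_option maxHeartbeats 1000000 in
theorem transfer_function_formula
    (V l d k₁ k₂ κ0 : ℝ)
    (hV : 0 < V) (hl : 0 < l) (hd : 0 < d) (hκ : d ^ 2 * κ0 ^ 2 < 1)
    (lam1 lam2 lam3 : ℝ)
    (hlam1 : lam1 = Real.sqrt (1 - d ^ 2 * κ0 ^ 2))
    (hlam2 : lam2 = 1 + (l ^ 2 - d ^ 2) * κ0 ^ 2)
    (hlam3 : lam3 = lam1 * lam2 * k₁ * k₂ - d * κ0 ^ 2 * lam2 * k₁ - l * κ0 ^ 2)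
    (A : Matrix (Fin 2) (Fin 2) ℂ)
    (hA : A = !![(↑(V * d / l * (lam2 / lam1) * (k₁ * k₂)) : ℂ),
                 (↑(V / lam1 * (1 + d / l * lam2 * k₁)) : ℂ);
                 (↑(V / l * (lam2 * (k₁ * k₂) - l / lam1 * κ0 ^ 2)) : ℂ),
                 (↑(V / l * lam2 * k₁) : ℂ)])
    (B : Matrix (Fin 2) (Fin 1) ℂ)
    (hB : B = !![(0 : ℂ); (↑(d / lam1) : ℂ)])
    (C : Matrix (Fin 1) (Fin 2) ℂ)
    (hC : C = !![(1 : ℂ), (0 : ℂ)]) :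
    ∀ s : ℂ, (s • (1 : Matrix (Fin 2) (Fin 2) ℂ) - A).det ≠ 0 →
      (C * (s • (1 : Matrix (Fin 2) (Fin 2) ℂ) - A)⁻¹ * B) 0 0 * s =
        (↑(V * d / lam1 ^ 2) * (1 + ↑(d / l * lam2 * k₁)) * s) /
          (s ^ 2 - ↑(V * lam2 * k₁ / (l * lam1) * (lam1 + d * k₂)) * s
            - ↑(V ^ 2 / l * (lam3 / lam1 ^ 2))) := by
  intro s hdet
  have hlam1pos : 0 < lam1 := by
    rw [hlam1]; exact Real.sqrt_pos.mpr (by nlinarith)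
  have hsq : lam1 ^ 2 = 1 - d ^ 2 * κ0 ^ 2 := by
    rw [hlam1]; exact Real.sq_sqrt (by nlinarith)
  have h1ne : lam1 ≠ 0 := ne_of_gt hlam1pos
  have hlne : l ≠ 0 := ne_of_gt hl
  -- real identities
  have htr : V * lam2 * k₁ / (l * lam1) * (lam1 + d * k₂)
      = V * d / l * (lam2 / lam1) * (k₁ * k₂) + V / l * lam2 * k₁ := by
    field_simp; ring
  have hdetA : - (V ^ 2 / l * (lam3 / lam1 ^ 2))
      = (V * d / l * (lam2 / lam1) * (k₁ * k₂)) * (V / l * lam2 * k₁)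
        - (V / lam1 * (1 + d / l * lam2 * k₁)) * (V / l * (lam2 * (k₁ * k₂) - l / lam1 * κ0 ^ 2)) := by
    subst hlam3
    field_simp
    linear_combination (V^2 * lam2 * k₁ * k₂ * l * lam1 - V^2*l^2*κ0^2 - V^2*d*lam2*k₁*κ0^2*l - V^2*lam1*lam2*k₁*k₂*l + V^2*lam2*k₁*d*κ0^2*l + V^2*κ0^2*l^2) * hsq
  have hnum : (V / lam1 * (1 + d / l * lam2 * k₁)) * (d / lam1)
      = V * d / lam1 ^ 2 * (1 + d / l * lam2 * k₁) := by
    field_simp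
  set M : Matrix (Fin 2) (Fin 2) ℂ := s • (1 : Matrix (Fin 2) (Fin 2) ℂ) - A with hM
  have hMe : M = !![s - ↑(V * d / l * (lam2 / lam1) * (k₁ * k₂)),
                    - ↑(V / lam1 * (1 + d / l * lam2 * k₁));
                    - ↑(V / l * (lam2 * (k₁ * k₂) - l / lam1 * κ0 ^ 2)),
                    s - ↑(V / l * lam2 * k₁)] := by
    rw [hM, hA]
    ext i j
    fin_cases i <;> fin_cases j <;>
      simp [Matrix.one_apply, sub_eq_add_neg]
  have hDet : M.det = s ^ 2 - ↑(V * lam2 * k₁ / (l * lam1) * (lam1 + d * k₂)) * s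
      - ↑(V ^ 2 / l * (lam3 / lam1 ^ 2)) := by
    rw [hMe, Matrix.det_fin_two_of, htr]
    have thisC := congrArg (Complex.ofReal) hdetA
    push_cast
    push_cast at thisC
    linear_combination -thisC
  have hinv : M⁻¹ = (M.det)⁻¹ • M.adjugate := by
    rw [Matrix.inv_def, Ring.inverse_eq_inv']
  have hadj : M.adjugate = !![M 1 1, -M 0 1; -M 1 0, M 0 0] := Matrix.adjugate_fin_two M
  have hCMB : (C * M⁻¹ * B) 0 0 = (M.det)⁻¹ * (-M 0 1) * ↑(d / lam1) := by
    rw [hinv, hadj, hB, hC]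
    simp [Matrix.mul_apply, Fin.sum_univ_two]
  have h01 : M 0 1 = -(↑(V / lam1 * (1 + d / l * lam2 * k₁)) : ℂ) := by
    rw [hMe]; simp
  rw [hDet] at hdet
  rw [hCMB, h01, hDet, neg_neg]
  have key : (↑(V / lam1 * (1 + d / l * lam2 * k₁)) : ℂ) * ↑(d / lam1)
      = ↑(V * d / lam1 ^ 2) * (1 + ↑(d / l * lam2 * k₁)) := by
    have h := congrArg (Complex.ofReal) hnum
    push_cast at h ⊢
    linear_combination h
  rw [eq_div_iff hdet]
  linear_combination ((↑(V / lam1 * (1 + d / l * lam2 * k₁)) : ℂ) * ↑(d / lam1) * s) * inv_mul_cancel₀ hdet + s * key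
end

section
/- Let V > 0, l > 0, d > 0, k₁, k₂ ∈ ℝ, κ₀ with d²κ₀² < 1, λ₁ = √(1 − d²κ₀²), λ₂ = 1 + (l² − d²)κ₀², λ₃ = λ₁λ₂k₁k₂ − dκ₀²λ₂k₁ − lκ₀², λ₄ = (V²/(l²λ₁²))·(2·l·λ₃ + λ₂²·k₁²·(λ₁ + d·k₂)²), and suppose λ₃ < 0 and k₁·(λ₁ + d·k₂) ≠ 0. Define M(ω) = √( ((V²d²/λ₁⁴)·(1 + (d/l)·λ₂·k₁)²·ω²) / (ω⁴ + λ₄·ω² + V⁴·λ₃²/(l²·λ₁⁴)) ). Then for every ω ∈ ℝ, M(ω) ≤ M_max := (d/λ₁)·|l + d·λ₂·k₁| / √(2·l·(λ₃ + |λ₃|) + λ₂²·k₁²·(λ₁ + d·k₂)²), and equality holds for ω = (V/λ₁)·√(|λ₃|/l). (Maximum amplification ratio, eqns (46)–(47).) -/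
open Real

set_option maxHeartbeats 1000000

theorem maximum_amplification_ratio
    (V l d k₁ k₂ κ0 : ℝ)
    (hV : 0 < V) (hl : 0 < l) (hd : 0 < d) (hκ : d ^ 2 * κ0 ^ 2 < 1)
    (lam1 lam2 lam3 lam4 : ℝ)
    (hlam1 : lam1 = Real.sqrt (1 - d ^ 2 * κ0 ^ 2))
    (hlam2 : lam2 = 1 + (l ^ 2 - d ^ 2) * κ0 ^ 2)
    (hlam3 : lam3 = lam1 * lam2 * k₁ * k₂ - d * κ0 ^ 2 * lam2 * k₁ - l * κ0 ^ 2)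
    (hlam4 : lam4 = V ^ 2 / (l ^ 2 * lam1 ^ 2) *
        (2 * l * lam3 + lam2 ^ 2 * k₁ ^ 2 * (lam1 + d * k₂) ^ 2))
    (hlam3neg : lam3 < 0)
    (hk : k₁ * (lam1 + d * k₂) ≠ 0)
    (M : ℝ → ℝ)
    (hM : ∀ ω : ℝ,
        M ω = Real.sqrt ((V ^ 2 * d ^ 2 / lam1 ^ 4 * (1 + d / l * lam2 * k₁) ^ 2 * ω ^ 2) /
          (ω ^ 4 + lam4 * ω ^ 2 + V ^ 4 * lam3 ^ 2 / (l ^ 2 * lam1 ^ 4))))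
    (Mmax : ℝ)
    (hMmax : Mmax = d / lam1 * (|l + d * lam2 * k₁| /
        Real.sqrt (2 * l * (lam3 + |lam3|) + lam2 ^ 2 * k₁ ^ 2 * (lam1 + d * k₂) ^ 2))) :
    (∀ ω : ℝ, M ω ≤ Mmax) ∧ M (V / lam1 * Real.sqrt (|lam3| / l)) = Mmax := by
  have h1 : 0 < 1 - d ^ 2 * κ0 ^ 2 := by linarith
  have hlam1pos : 0 < lam1 := hlam1 ▸ Real.sqrt_pos.mpr h1
  have hlam1sq : lam1 ^ 2 = 1 - d ^ 2 * κ0 ^ 2 := by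
    rw [hlam1, sq, Real.mul_self_sqrt h1.le]
  have hlam2pos : 0 < lam2 := by nlinarith [sq_nonneg (l * κ0)]
  have habs : |lam3| = -lam3 := abs_of_neg hlam3neg
  set A : ℝ := lam2 ^ 2 * k₁ ^ 2 * (lam1 + d * k₂) ^ 2 with hA
  have hApos : 0 < A := by
    have h2 := pow_two_pos_of_ne_zero hk
    have hAe : A = lam2 ^ 2 * (k₁ * (lam1 + d * k₂)) ^ 2 := by rw [hA]; ring
    rw [hAe]
    exact mul_pos (pow_pos hlam2pos 2) h2
  set c : ℝ := V ^ 2 * (-lam3) / (l * lam1 ^ 2) with hc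
  have hcpos : 0 < c := by
    apply div_pos
    · have : 0 < -lam3 := by linarith
      positivity
    · positivity
  set B : ℝ := V ^ 2 * A / (l ^ 2 * lam1 ^ 2) with hB
  have hBpos : 0 < B := div_pos (mul_pos (pow_pos hV 2) hApos) (by positivity)
  have hc2 : c ^ 2 = V ^ 4 * lam3 ^ 2 / (l ^ 2 * lam1 ^ 4) := by
    rw [hc]; field_simp
  have hlam4B : lam4 = B - 2 * c := by
    rw [hlam4, hB, hc, hA]; field_simp; ring
  set a : ℝ := V ^ 2 * d ^ 2 / lam1 ^ 4 * (1 + d / l * lam2 * k₁) ^ 2 with ha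
  have hanonneg : 0 ≤ a := by positivity
  have hD : ∀ ω : ℝ, ω ^ 4 + lam4 * ω ^ 2 + V ^ 4 * lam3 ^ 2 / (l ^ 2 * lam1 ^ 4)
      = (ω ^ 2 - c) ^ 2 + B * ω ^ 2 := by
    intro ω
    rw [hlam4B, ← hc2]; ring
  -- Mmax = sqrt (a / B)
  have hsqA : Real.sqrt A ^ 2 = A := Real.sq_sqrt hApos.le
  have hsqApos : 0 < Real.sqrt A := Real.sqrt_pos.mpr hApos
  have hMmaxA : Mmax = d / lam1 * (|l + d * lam2 * k₁| / Real.sqrt A) := by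
    rw [hMmax, habs, hA]
    ring_nf
  have hMmaxnn : 0 ≤ Mmax := by
    rw [hMmaxA]; positivity
  have hMmaxsq : Mmax ^ 2 = a / B := by
    rw [hMmaxA, ha, hB]
    rw [mul_pow, div_pow, div_pow, sq_abs, hsqA]
    field_simp
  have hMs : Real.sqrt (a / B) = Mmax := by
    rw [← hMmaxsq, Real.sqrt_sq hMmaxnn]
  clear_value A c B a
  constructor
  · intro ω
    rw [hM ω, hD ω]
    rw [← hMs]
    apply Real.sqrt_le_sqrt
    have hDpos : 0 < (ω ^ 2 - c) ^ 2 + B * ω ^ 2 := by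
      rcases eq_or_ne ω 0 with h | h
      · subst h; nlinarith
      · have hω : 0 < ω ^ 2 := pow_two_pos_of_ne_zero h
        nlinarith [sq_nonneg (ω ^ 2 - c), mul_pos hBpos hω]
    rw [div_le_div_iff₀ hDpos hBpos]
    nlinarith [mul_nonneg hanonneg (sq_nonneg (ω ^ 2 - c))]
  · have hω0 : (V / lam1 * Real.sqrt (|lam3| / l)) ^ 2 = c := by
      have hs : Real.sqrt (|lam3| / l) ^ 2 = -lam3 / l := by
        rw [habs]; exact Real.sq_sqrt (div_nonneg (by linarith) hl.le)
      rw [mul_pow, hs, hc, div_pow, div_mul_div_comm, mul_comm (lam1 ^ 2) l]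
    rw [hM _, hD _, hω0]
    have : a * c / ((c - c) ^ 2 + B * c) = a / B := by
      rw [show (c - c) ^ 2 + B * c = B * c by ring]
      rw [mul_comm B c, mul_comm a c, mul_div_mul_left _ _ hcpos.ne']
    rw [this, hMs]
end

section
/- Let V > 0, l > 0, d > 0, k₂ ∈ ℝ, κ₀ with d²κ₀² < 1, λ₁ = √(1 − d²κ₀²), λ₂ = 1 + (l² − d²)κ₀² > 0, λ₄ as below, and set the gain k₁ = −l/(d·λ₂). Then 1 + (d/l)·λ₂·k₁ = 0, and consequently the amplification ratio M(ω) = √( ((V²d²/λ₁⁴)·(1 + (d/l)·λ₂·k₁)²·ω²) / (ω⁴ + λ₄·ω² + V⁴·λ₃²/(l²·λ₁⁴)) ) equals 0 for every ω ∈ ℝ at which the denominator is nonzero; i.e., curvature variations produce no first-order lateral deviation at any frequency. (Claim 2.) -/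
open Real

theorem zero_amplification_optimal_gain
    (V l d k₂ κ0 : ℝ)
    (hV : 0 < V) (hl : 0 < l) (hd : 0 < d) (hκ : d ^ 2 * κ0 ^ 2 < 1)
    (lam1 lam2 : ℝ)
    (hlam1 : lam1 = Real.sqrt (1 - d ^ 2 * κ0 ^ 2))
    (hlam2 : lam2 = 1 + (l ^ 2 - d ^ 2) * κ0 ^ 2)
    (hlam2pos : 0 < lam2)
    (k₁ : ℝ) (hk₁ : k₁ = -l / (d * lam2))
    (lam3 lam4 : ℝ)
    (hlam3 : lam3 = lam1 * lam2 * k₁ * k₂ - d * κ0 ^ 2 * lam2 * k₁ - l * κ0 ^ 2)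
    (hlam4 : lam4 = V ^ 2 / (l ^ 2 * lam1 ^ 2) *
        (2 * l * lam3 + lam2 ^ 2 * k₁ ^ 2 * (lam1 + d * k₂) ^ 2))
    (M : ℝ → ℝ)
    (hM : ∀ ω : ℝ,
        M ω = Real.sqrt ((V ^ 2 * d ^ 2 / lam1 ^ 4 * (1 + d / l * lam2 * k₁) ^ 2 * ω ^ 2) /
          (ω ^ 4 + lam4 * ω ^ 2 + V ^ 4 * lam3 ^ 2 / (l ^ 2 * lam1 ^ 4)))) :
    1 + d / l * lam2 * k₁ = 0 ∧
    ∀ ω : ℝ, ω ^ 4 + lam4 * ω ^ 2 + V ^ 4 * lam3 ^ 2 / (l ^ 2 * lam1 ^ 4) ≠ 0 →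
      M ω = 0 := by
  have hzero : 1 + d / l * lam2 * k₁ = 0 := by
    rw [hk₁]; field_simp; ring
  refine ⟨hzero, fun ω hω => ?_⟩
  rw [hM ω, hzero]
  simp
end

section
/- Let V > 0, l > 0 and d ≠ 0. Let I ⊆ ℝ be a nontrivial interval, κ : ℝ → ℝ, and let s_D, e_D, θ_D : I → ℝ be differentiable and γ : I → (−π/2, π/2) be such that the path-following dynamics hold on I: ė_D(t) = V(sin θ_D(t) + (d/l)·tan γ(t)·cos θ_D(t)) and θ̇_D(t) = (V/l)·tan γ(t) − V·κ(s_D(t))·(1 − e_D(t)·κ(s_D(t)))⁻¹·(cos θ_D(t) − (d/l)·tan γ(t)·sin θ_D(t)). If e_D(t) = 0 and θ_D(t) = 0 for all t ∈ I, then κ(s_D(t)) = 0 for all t ∈ I. In particular, on a path of nonzero curvature no steering input can maintain zero lateral deviation and zero yaw angle error simultaneously when d ≠ 0. -/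
/-!
If both errors vanish identically on a nontrivial interval, so do their derivatives. At zero
errors the lateral equation reduces to `V (d / l) tan γ = 0`, forcing `tan γ = 0` since `d ≠ 0`;
the yaw equation then reduces to `V κ = 0`.
-/

open Real Set

theorem Set.OrdConnected.uniqueDiffOn {I : Set ℝ} (hI : I.OrdConnected) (hnt : I.Nontrivial) :
    UniqueDiffOn ℝ I := by
  obtain ⟨a, ha, b, hb, hab⟩ := hnt.exists_lt
  refine uniqueDiffOn_convex hI.convex ⟨(a + b) / 2, ?_⟩
  refine interior_mono (hI.out ha hb) ?_
  rw [interior_Icc]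
  constructor <;> linarith

theorem HasDerivWithinAt.eq_zero_of_const_on {𝕜 F : Type*} [NontriviallyNormedField 𝕜]
    [NormedAddCommGroup F] [NormedSpace 𝕜 F] {f : 𝕜 → F} {f' c : F} {s : Set 𝕜} {x : 𝕜}
    (h : HasDerivWithinAt f f' s x) (hf : ∀ y ∈ s, f y = c) (hx : x ∈ s)
    (hs : UniqueDiffWithinAt 𝕜 s x) : f' = 0 :=
  hs.eq_deriv s h ((hasDerivWithinAt_const x s c).congr hf (hf x hx))

theorem curvature_eq_zero_of_zero_rates {V l d τ k : ℝ} (hV : V ≠ 0) (hl : l ≠ 0) (hd : d ≠ 0)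
    (he : V * (d / l * τ) = 0) (hθ : V / l * τ - V * k = 0) : k = 0 := by
  have hτ : τ = 0 := by
    simpa [hV, hd, hl] using he
  simpa [hτ, hV] using hθ

theorem no_simultaneous_zero_errors_on_curves_general
    (V l d : ℝ) (hV : 0 < V) (hl : 0 < l) (hd : d ≠ 0)
    (I : Set ℝ) (hI : I.OrdConnected) (hInt : I.Nontrivial)
    (κ : ℝ → ℝ) (sD eD θD γ : ℝ → ℝ)
    (heD : ∀ t ∈ I, HasDerivWithinAt eD
        (V * (Real.sin (θD t) + d / l * Real.tan (γ t) * Real.cos (θD t))) I t)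
    (hθD : ∀ t ∈ I, HasDerivWithinAt θD
        (V / l * Real.tan (γ t)
          - V * κ (sD t) / (1 - eD t * κ (sD t)) *
            (Real.cos (θD t) - d / l * Real.tan (γ t) * Real.sin (θD t))) I t)
    (heD0 : ∀ t ∈ I, eD t = 0) (hθD0 : ∀ t ∈ I, θD t = 0) :
    ∀ t ∈ I, κ (sD t) = 0 := by
  intro t ht
  have hunique := hI.uniqueDiffOn hInt t ht
  have he := (heD t ht).eq_zero_of_const_on heD0 ht hunique
  have hθ := (hθD t ht).eq_zero_of_const_on hθD0 ht hunique
  rw [heD0 t ht, hθD0 t ht] at hθ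
  rw [hθD0 t ht] at he
  simp only [sin_zero, cos_zero, zero_add, mul_one, zero_mul, sub_zero, div_one, mul_zero] at he hθ
  exact curvature_eq_zero_of_zero_rates hV.ne' hl.ne' hd he hθ

theorem no_simultaneous_zero_errors_on_curves
    (V l d : ℝ) (hV : 0 < V) (hl : 0 < l) (hd : d ≠ 0)
    (I : Set ℝ) (hI : I.OrdConnected) (hInt : I.Nontrivial)
    (κ : ℝ → ℝ) (sD eD θD γ : ℝ → ℝ)
    (hγrange : ∀ t ∈ I, γ t ∈ Set.Ioo (-(π / 2)) (π / 2))
    (heD : ∀ t ∈ I, HasDerivWithinAt eD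
        (V * (Real.sin (θD t) + d / l * Real.tan (γ t) * Real.cos (θD t))) I t)
    (hθD : ∀ t ∈ I, HasDerivWithinAt θD
        (V / l * Real.tan (γ t)
          - V * κ (sD t) / (1 - eD t * κ (sD t)) *
            (Real.cos (θD t) - d / l * Real.tan (γ t) * Real.sin (θD t))) I t)
    (heD0 : ∀ t ∈ I, eD t = 0) (hθD0 : ∀ t ∈ I, θD t = 0) :
    ∀ t ∈ I, κ (sD t) = 0 :=
  no_simultaneous_zero_errors_on_curves_general V l d hV hl hd I hI hInt κ sD eD θD γ heD hθD heD0
    hθD0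
end
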